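/- For every Cartesian tree T on m ≥ 2 nodes, the size of its swap neighbourhood satisfies m - 1 ≤ |ng(T)| ≤ 3(m-2) + 1. -/

import Mathlib

/-!
Splitting a sequence at the first occurrence of its minimum splits its Cartesian tree at the
root, so every fact below is proved by induction along that decomposition
(`cartesian_induction`). A swap of adjacent entries either stays inside the left or the right
part, and then acts on that subtree only, or exchanges the minimum with a neighbour: the
neighbour then leaves one subtree (as its rightmost or leftmost node) and is inserted at some
depth on a spine of the other one. This gives a set `BTree.swapNeighbors T` of candidates
containing `ng(T)`, whose size is at most `3 (m - 2) + 1` by induction on `T`.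

For the lower bound, the Cartesian tree of a sequence `x` of distinct numbers determines its
ascents: node `k` (in in-order) has a right child iff `x k < x (k + 1)`. A swap at `i` reverses
the ascent at `i`, which a swap at `j ≥ i + 2` leaves alone; for `j = i + 1`, equal trees would
force a cyclic chain of inequalities among `x i`, `x (i + 1)`, `x (i + 2)`. So the `m - 1` swaps
of one sequence realizing `T` give `m - 1` distinct trees.
-/

/-- Binary tree shapes (Cartesian trees are determined by their shape). -/
inductive BTree : Type
  | nil : BTree
  | node : BTree → BTree → BTree
deriving DecidableEq

namespace BTree

/-- Number of nodes. -/
def size : BTree → ℕ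
  | nil => 0
  | node l r => size l + size r + 1

/-- Length of the leftmost path. -/
def LMP : BTree → ℕ
  | nil => 0
  | node l _ => LMP l + 1

/-- Length of the rightmost path. -/
def RMP : BTree → ℕ
  | nil => 0
  | node _ r => RMP r + 1

end BTree

/-- Minimum value of a list (0 for the empty list). -/
def listMin : List ℤ → ℤ
  | [] => 0
  | a :: t => t.foldl min a

/-- Index (0-based) of the minimum of a list. -/
def minIdx (l : List ℤ) : ℕ := l.idxOf (listMin l)

/-- Cartesian tree of a list, with fuel for termination. -/
def ctreeAux : ℕ → List ℤ → BTree
  | 0, _ => .nil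
  | _ + 1, [] => .nil
  | n + 1, a :: t =>
      let g := minIdx (a :: t)
      .node (ctreeAux n ((a :: t).take g)) (ctreeAux n ((a :: t).drop (g + 1)))

/-- Cartesian tree of a list: the root is the position of the minimum,
its subtrees are the Cartesian trees of the prefix and suffix around it. -/
def ctreeL (l : List ℤ) : BTree := ctreeAux l.length l

/-- The factor x[a..b] (1-based positions) of a sequence, as a list. -/
def seqList (x : ℕ → ℤ) (a b : ℕ) : List ℤ :=
  (List.range (b + 1 - a)).map (fun k => x (a + k))

/-- Cartesian tree of the sequence x[1..m]. -/
def ctreeOf (m : ℕ) (x : ℕ → ℤ) : BTree := ctreeL (seqList x 1 m)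

/-- Positions j < h (1-based) with x[j] < x[h]. -/
def PDset (x : ℕ → ℤ) (h : ℕ) : Finset ℕ :=
  (Finset.Ico 1 h).filter (fun j => x j < x h)

/-- Parent-distance table: PD_x[h] = h - max{j < h : x[j] < x[h]}, 0 if no such j. -/
def PD (x : ℕ → ℤ) (h : ℕ) : ℕ :=
  if hs : (PDset x h).Nonempty then h - (PDset x h).max' hs else 0

/-- Positions h < j ≤ m with x[j] < x[h]. -/
def RPDset (m : ℕ) (x : ℕ → ℤ) (h : ℕ) : Finset ℕ :=
  (Finset.Ioc h m).filter (fun j => x j < x h)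

/-- Reverse parent-distance table: RPD_x[h] = min{j > h : x[j] < x[h]} - h, 0 if no such j. -/
def RPD (m : ℕ) (x : ℕ → ℤ) (h : ℕ) : ℕ :=
  if hs : (RPDset m x h).Nonempty then (RPDset m x h).min' hs - h else 0

/-- Referent of h: the smallest position j > h with x[j] < x[h], or -1 if none. -/
def refD (m : ℕ) (x : ℕ → ℤ) (h : ℕ) : ℤ :=
  if hs : (RPDset m x h).Nonempty then ((RPDset m x h).min' hs : ℤ) else -1

/-- Skipped-number table: SN_x[h] is the number of nodes on the rightmost path of the
left subtree of node h in C(x), i.e. the number of positions whose referent is h. -/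
def SN (m : ℕ) (x : ℕ → ℤ) (h : ℕ) : ℕ :=
  ((Finset.Ico 1 h).filter (fun j => refD m x j = (h : ℤ))).card

/-- The swap τ(x,i): exchange the entries at positions i and i+1. -/
def swapAt (x : ℕ → ℤ) (i : ℕ) : ℕ → ℤ :=
  fun j => if j = i then x (i + 1) else if j = i + 1 then x i else x j

/-- ng(T,i): the Cartesian trees obtained from a sequence realizing T by one swap
at position i (valid positions are 1 ≤ i ≤ m-1). -/
def ngi (m : ℕ) (T : BTree) (i : ℕ) : Set BTree :=
  { S | 1 ≤ i ∧ i + 1 ≤ m ∧ ∃ x : ℕ → ℤ, Set.InjOn x (Set.Icc 1 m) ∧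
        ctreeOf m x = T ∧ S = ctreeOf m (swapAt x i) }

/-- ng(T): the swap neighbourhood of T. -/
def ng (m : ℕ) (T : BTree) : Set BTree := ⋃ i, ngi m T i

/-- Number of permutations of {1,...,n} whose Cartesian tree is A. -/
noncomputable def permCount (n : ℕ) (A : BTree) : ℕ :=
  Set.ncard { σ : Equiv.Perm (Fin n) |
    ctreeL (List.ofFn (fun k : Fin n => ((σ k : ℕ) : ℤ) + 1)) = A }

/-- Product over all nodes t of A of the size of the subtree rooted at t. -/
def hookProd : BTree → ℕ
  | .nil => 1
  | .node l r => (BTree.node l r).size * hookProd l * hookProd r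

theorem ctreeL_nil : ctreeL [] = .nil := rfl

theorem listMin_mem {l : List ℤ} (hl : l ≠ []) : listMin l ∈ l := by
  obtain _ | ⟨a, t⟩ := l
  · exact absurd rfl hl
  · exact List.min?_mem (List.min?_cons' (x := a) (xs := t))

theorem listMin_eq {l : List ℤ} {v : ℤ} (hv : v ∈ l) (hmin : ∀ w ∈ l, v ≤ w) : listMin l = v := by
  obtain _ | ⟨a, t⟩ := l
  · simp at hv
  · have := List.min?_eq_some_iff.2 ⟨hv, hmin⟩
    rw [List.min?_cons'] at this
    exact Option.some_injective _ this

theorem minIdx_lt_length {l : List ℤ} (hl : l ≠ []) : minIdx l < l.length :=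
  List.idxOf_lt_length_iff.2 (listMin_mem hl)

theorem ctreeAux_eq_of_length_le : ∀ {n k : ℕ} {l : List ℤ}, l.length ≤ n → l.length ≤ k →
    ctreeAux n l = ctreeAux k l
  | 0, 0, _, _, _ => rfl
  | 0, _ + 1, [], _, _ | _ + 1, 0, [], _, _ | _ + 1, _ + 1, [], _, _ => rfl
  | n + 1, k + 1, a :: t, hn, hk => by
    have hg := minIdx_lt_length (l := a :: t) (by simp)
    simp only [ctreeAux]
    congr 1 <;> apply ctreeAux_eq_of_length_le <;>
      simp only [List.length_cons, List.length_take, List.length_drop] at hn hk hg ⊢ <;> omega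

theorem ctreeL_split {l : List ℤ} (hl : l ≠ []) :
    ctreeL l = .node (ctreeL (l.take (minIdx l))) (ctreeL (l.drop (minIdx l + 1))) := by
  obtain _ | ⟨a, t⟩ := l
  · exact absurd rfl hl
  have hg := minIdx_lt_length hl
  simp only [ctreeL, List.length_cons, ctreeAux]
  congr 1 <;> apply ctreeAux_eq_of_length_le <;>
    simp only [List.length_cons, List.length_take, List.length_drop] at hg ⊢ <;> omega

theorem ctreeL_append_cons {L R : List ℤ} {v : ℤ} (hL : ∀ w ∈ L, v < w) (hR : ∀ w ∈ R, v ≤ w) :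
    ctreeL (L ++ v :: R) = .node (ctreeL L) (ctreeL R) := by
  have hmin : listMin (L ++ v :: R) = v :=
    listMin_eq (by simp) (by grind)
  have hidx : minIdx (L ++ v :: R) = L.length := by
    rw [minIdx, hmin, List.idxOf_append_of_notMem (fun h => lt_irrefl v (hL v h))]
    simp
  rw [ctreeL_split (by simp), hidx]
  simp

theorem exists_eq_append_cons_min : ∀ {l : List ℤ}, l ≠ [] →
    ∃ L v R, l = L ++ v :: R ∧ (∀ w ∈ L, v < w) ∧ (∀ w ∈ R, v ≤ w)
  | [a], _ => ⟨[], a, [], rfl, by simp, by simp⟩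
  | a :: b :: t, _ => by
    obtain ⟨L, v, R, ht, hL, hR⟩ := exists_eq_append_cons_min (l := b :: t) (by simp)
    rcases le_or_gt a v with hav | hva
    · refine ⟨[], a, b :: t, rfl, by simp, fun w hw => ?_⟩
      rw [ht] at hw
      grind
    · exact ⟨a :: L, v, R, by simp [ht], by grind, hR⟩

@[elab_as_elim]
theorem cartesian_induction {motive : List ℤ → Prop} (nil : motive [])
    (append_cons : ∀ L v R, (∀ w ∈ L, v < w) → (∀ w ∈ R, v ≤ w) → motive L → motive R →
      motive (L ++ v :: R))
    (l : List ℤ) : motive l := by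
  obtain rfl | hl := eq_or_ne l []
  · exact nil
  obtain ⟨L, v, R, rfl, hL, hR⟩ := exists_eq_append_cons_min hl
  exact append_cons L v R hL hR (cartesian_induction nil append_cons L)
    (cartesian_induction nil append_cons R)
termination_by l.length
decreasing_by all_goals (subst_vars; simp only [List.length_append, List.length_cons]; omega)

theorem size_ctreeL (l : List ℤ) : (ctreeL l).size = l.length := by
  induction l using cartesian_induction with
  | nil => rfl
  | append_cons L v R hL hR ihL ihR =>
    rw [ctreeL_append_cons hL hR, BTree.size, ihL, ihR]
    simp only [List.length_append, List.length_cons]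
    omega

theorem ctreeL_eq_nil_iff {l : List ℤ} : ctreeL l = .nil ↔ l = [] := by
  constructor
  · intro h
    simpa [h, BTree.size] using (size_ctreeL l).symm
  · rintro rfl
    rfl

namespace BTree

def eraseLeftmost : BTree → BTree
  | nil => nil
  | node nil r => r
  | node (node l r) r' => node (node l r).eraseLeftmost r'

def eraseRightmost : BTree → BTree
  | nil => nil
  | node l nil => l
  | node l (node l' r) => node l (node l' r).eraseRightmost

def insertLeftSpine (t : BTree) : ℕ → BTree
  | 0 => node nil t
  | k + 1 => match t with
    | nil => node nil nil
    | node l r => node (l.insertLeftSpine k) r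

def insertRightSpine (t : BTree) : ℕ → BTree
  | 0 => node t nil
  | k + 1 => match t with
    | nil => node nil nil
    | node l r => node l (r.insertRightSpine k)

theorem eraseLeftmost_node {l : BTree} (hl : l ≠ nil) (r : BTree) :
    (node l r).eraseLeftmost = node l.eraseLeftmost r := by
  cases l
  · exact absurd rfl hl
  · rfl

theorem eraseRightmost_node (l : BTree) {r : BTree} (hr : r ≠ nil) :
    (node l r).eraseRightmost = node l r.eraseRightmost := by
  cases r
  · exact absurd rfl hr
  · rfl

end BTree

open BTree

theorem ctreeL_tail (l : List ℤ) : ctreeL l.tail = (ctreeL l).eraseLeftmost := by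
  induction l using cartesian_induction with
  | nil => rfl
  | append_cons L v R hL hR ihL _ =>
    rw [ctreeL_append_cons hL hR]
    obtain _ | ⟨a, L⟩ := L
    · rfl
    · rw [eraseLeftmost_node (by simp [ctreeL_eq_nil_iff]), ← ihL, List.cons_append,
        List.tail_cons, ctreeL_append_cons (by grind) hR, List.tail_cons]

theorem ctreeL_dropLast (l : List ℤ) : ctreeL l.dropLast = (ctreeL l).eraseRightmost := by
  induction l using cartesian_induction with
  | nil => rfl
  | append_cons L v R hL hR _ ihR =>
    rw [ctreeL_append_cons hL hR]
    obtain rfl | hR0 := eq_or_ne R []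
    · simp only [List.dropLast_append_cons, List.dropLast_singleton, List.append_nil]
      rfl
    · rw [eraseRightmost_node _ (by simpa [ctreeL_eq_nil_iff]), ← ihR,
        ← ctreeL_append_cons hL (fun w hw => hR w (List.mem_of_mem_dropLast hw)),
        List.dropLast_append_cons, List.dropLast_cons_of_ne_nil hR0]

theorem exists_ctreeL_cons (a : ℤ) (l : List ℤ) :
    ∃ k ≤ (ctreeL l).LMP, ctreeL (a :: l) = (ctreeL l).insertLeftSpine k := by
  induction l using cartesian_induction generalizing a with
  | nil => exact ⟨0, le_rfl, rfl⟩
  | append_cons L v R hL hR ihL _ =>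
    rcases le_or_gt a v with hav | hva
    · refine ⟨0, Nat.zero_le _, ?_⟩
      rw [← List.nil_append (a :: _), ctreeL_append_cons (by simp) (by grind), ctreeL_nil,
        insertLeftSpine]
    · obtain ⟨k, hk, hka⟩ := ihL a
      refine ⟨k + 1, ?_, ?_⟩
      · rw [ctreeL_append_cons hL hR, LMP]
        omega
      · rw [← List.cons_append, ctreeL_append_cons (by grind) hR, ctreeL_append_cons hL hR, hka]
        rfl

theorem exists_ctreeL_concat (l : List ℤ) (a : ℤ) :
    ∃ k ≤ (ctreeL l).RMP, ctreeL (l ++ [a]) = (ctreeL l).insertRightSpine k := by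
  induction l using cartesian_induction generalizing a with
  | nil => exact ⟨0, le_rfl, rfl⟩
  | append_cons L v R hL hR _ ihR =>
    rcases lt_or_ge a v with hav | hva
    · refine ⟨0, Nat.zero_le _, ?_⟩
      rw [ctreeL_append_cons (by grind) (by simp), ctreeL_nil, insertRightSpine]
    · obtain ⟨k, hk, hka⟩ := ihR a
      refine ⟨k + 1, ?_, ?_⟩
      · rw [ctreeL_append_cons hL hR, RMP]
        omega
      · rw [List.append_assoc, List.cons_append, ctreeL_append_cons hL (by grind),
          ctreeL_append_cons hL hR, hka]
        rfl

namespace List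

variable {α : Type*}

/-- Positions are 0-based; the identity if `i + 1` is out of range. -/
def swapAdj : List α → ℕ → List α
  | a :: b :: l, 0 => b :: a :: l
  | a :: l, i + 1 => a :: l.swapAdj i
  | l, _ => l

theorem swapAdj_cons_cons_zero (a b : α) (l : List α) : (a :: b :: l).swapAdj 0 = b :: a :: l :=
  rfl

theorem swapAdj_cons_succ (a : α) (l : List α) (i : ℕ) :
    (a :: l).swapAdj (i + 1) = a :: l.swapAdj i := by
  cases l <;> rfl

theorem swapAdj_perm (l : List α) (i : ℕ) : (l.swapAdj i).Perm l := by
  fun_induction swapAdj l i with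
  | case1 a b l => exact .swap a b l
  | case2 a l i ih => exact ih.cons a
  | case3 l i => exact .refl l

theorem swapAdj_append_left {L : List α} {i : ℕ} (hi : i + 1 < L.length) (M : List α) :
    (L ++ M).swapAdj i = L.swapAdj i ++ M := by
  induction L generalizing i with
  | nil => simp at hi
  | cons a L ih =>
    obtain _ | i := i
    · obtain _ | ⟨b, L⟩ := L
      · simp at hi
      · rfl
    · rw [cons_append, swapAdj_cons_succ, ih (by simpa using hi), swapAdj_cons_succ, cons_append]

theorem swapAdj_append_right {L : List α} {i : ℕ} (hi : L.length ≤ i) (M : List α) :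
    (L ++ M).swapAdj i = L ++ M.swapAdj (i - L.length) := by
  induction L generalizing i with
  | nil => rfl
  | cons a L ih =>
    obtain _ | i := i
    · simp at hi
    · rw [cons_append, swapAdj_cons_succ, ih (by simpa using hi), length_cons,
        Nat.add_sub_add_right, cons_append]

end List

namespace BTree

/-- A swap inside the left or right part of the sequence acts on that subtree alone; a swap of
the root with its in-order predecessor (successor) moves that node to the other side of the
root, onto the left spine of the right subtree (the right spine of the left subtree). -/
def swapNeighbors : BTree → Finset BTree
  | nil => ∅
  | node L R =>
    (L.swapNeighbors.image fun A => node A R) ∪ (R.swapNeighbors.image fun B => node L B) ∪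
      (if L = nil then ∅ else
        (Finset.range (R.LMP + 1)).image fun k => node L.eraseRightmost (R.insertLeftSpine k)) ∪
      (if R = nil then ∅ else
        (Finset.range (L.RMP + 1)).image fun k => node (L.insertRightSpine k) R.eraseLeftmost)

variable {L R : BTree}

theorem mem_swapNeighbors_node_left {A : BTree} (hA : A ∈ L.swapNeighbors) :
    node A R ∈ (node L R).swapNeighbors := by
  simp only [swapNeighbors, Finset.mem_union, Finset.mem_image]
  exact .inl <| .inl <| .inl ⟨A, hA, rfl⟩

theorem mem_swapNeighbors_node_right {B : BTree} (hB : B ∈ R.swapNeighbors) :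
    node L B ∈ (node L R).swapNeighbors := by
  simp only [swapNeighbors, Finset.mem_union, Finset.mem_image]
  exact .inl <| .inl <| .inr ⟨B, hB, rfl⟩

theorem mem_swapNeighbors_node_pred (hL : L ≠ nil) {k : ℕ} (hk : k ≤ R.LMP) :
    node L.eraseRightmost (R.insertLeftSpine k) ∈ (node L R).swapNeighbors := by
  simp only [swapNeighbors, Finset.mem_union, if_neg hL, Finset.mem_image, Finset.mem_range]
  exact .inl <| .inr ⟨k, by omega, rfl⟩

theorem mem_swapNeighbors_node_succ (hR : R ≠ nil) {k : ℕ} (hk : k ≤ L.RMP) :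
    node (L.insertRightSpine k) R.eraseLeftmost ∈ (node L R).swapNeighbors := by
  simp only [swapNeighbors, Finset.mem_union, if_neg hR, Finset.mem_image, Finset.mem_range]
  exact .inr ⟨k, by omega, rfl⟩

end BTree

theorem lt_of_nodup_append_cons {L R : List ℤ} {v : ℤ} (hl : (L ++ v :: R).Nodup)
    (hR : ∀ w ∈ R, v ≤ w) : ∀ w ∈ R, v < w := fun w hw =>
  (hR w hw).lt_of_ne fun hvw => (List.nodup_cons.1 hl.of_append_right).1 (hvw ▸ hw)

theorem ctreeL_swapAdj_mem_swapNeighbors {l : List ℤ} (hl : l.Nodup) {i : ℕ}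
    (hi : i + 1 < l.length) :
    ctreeL (l.swapAdj i) ∈ (ctreeL l).swapNeighbors := by
  induction l using cartesian_induction generalizing i with
  | nil => simp at hi
  | append_cons L v R hL hR ihL ihR =>
    rw [ctreeL_append_cons hL hR]
    rcases lt_trichotomy (i + 1) L.length with hiL | hiL | hiL
    · rw [List.swapAdj_append_left hiL,
        ctreeL_append_cons (fun w hw => hL w ((L.swapAdj_perm i).subset hw)) hR]
      exact mem_swapNeighbors_node_left (ihL hl.of_append_left hiL)
    · obtain ⟨L₀, u, rfl⟩ := (List.eq_nil_or_concat' L).resolve_left (by rintro rfl; simp at hiL)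
      simp only [List.length_append, List.length_singleton] at hiL
      obtain ⟨k, hk, hku⟩ := exists_ctreeL_cons u R
      have hswap : (L₀ ++ [u] ++ v :: R).swapAdj i = L₀ ++ v :: u :: R := by
        rw [List.append_assoc, List.singleton_append, List.swapAdj_append_right (by omega),
          show i - L₀.length = 0 by omega, List.swapAdj_cons_cons_zero]
      have hL₀ : ctreeL L₀ = (ctreeL (L₀ ++ [u])).eraseRightmost := by
        rw [← ctreeL_dropLast, List.dropLast_concat]
      rw [hswap, ctreeL_append_cons (fun w hw => hL w (List.mem_append_left _ hw))
        (List.forall_mem_cons.2 ⟨(hL u (by simp)).le, hR⟩), hku, hL₀]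
      exact mem_swapNeighbors_node_pred (by simp [ctreeL_eq_nil_iff]) hk
    obtain rfl | hiL := (Nat.lt_succ_iff.1 hiL).eq_or_lt
    · obtain ⟨w, R₀, rfl⟩ := List.exists_cons_of_ne_nil (l := R) (by rintro rfl; simp at hi)
      obtain ⟨k, hk, hkw⟩ := exists_ctreeL_concat L w
      have hvw : v < w := lt_of_nodup_append_cons hl hR w (by simp)
      have hswap : (L ++ v :: w :: R₀).swapAdj L.length = (L ++ [w]) ++ v :: R₀ := by
        rw [List.swapAdj_append_right le_rfl, Nat.sub_self, List.swapAdj_cons_cons_zero]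
        simp
      have hR₀ : ctreeL R₀ = (ctreeL (w :: R₀)).eraseLeftmost := by
        rw [← ctreeL_tail, List.tail_cons]
      rw [hswap, ctreeL_append_cons (List.forall_mem_append.2 ⟨hL, List.forall_mem_singleton.2 hvw⟩)
        (fun x hx => hR x (List.mem_cons_of_mem w hx)), hkw, hR₀]
      exact mem_swapNeighbors_node_succ (by simp [ctreeL_eq_nil_iff]) hk
    · obtain ⟨j, rfl⟩ := Nat.exists_eq_add_of_lt hiL
      rw [List.swapAdj_append_right hiL.le, show L.length + j + 1 - L.length = j + 1 by omega,
        List.swapAdj_cons_succ,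
        ctreeL_append_cons hL fun w hw => hR w ((R.swapAdj_perm _).subset hw)]
      exact mem_swapNeighbors_node_right
        (ihR (List.nodup_cons.1 hl.of_append_right).2 (by simp at hi; omega))

namespace BTree

@[simp] theorem size_nil : nil.size = 0 := rfl
@[simp] theorem LMP_nil : nil.LMP = 0 := rfl
@[simp] theorem RMP_nil : nil.RMP = 0 := rfl
@[simp] theorem swapNeighbors_nil : nil.swapNeighbors = ∅ := rfl

theorem LMP_pos {T : BTree} (hT : T ≠ nil) : 0 < T.LMP := by
  cases T
  · exact absurd rfl hT
  · exact Nat.succ_pos _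

theorem RMP_pos {T : BTree} (hT : T ≠ nil) : 0 < T.RMP := by
  cases T
  · exact absurd rfl hT
  · exact Nat.succ_pos _

theorem card_swapNeighbors_node_le (L R : BTree) :
    (node L R).swapNeighbors.card ≤ L.swapNeighbors.card + R.swapNeighbors.card +
      (if L = nil then 0 else R.LMP + 1) + (if R = nil then 0 else L.RMP + 1) := by
  rw [swapNeighbors]
  refine (Finset.card_union_le _ _).trans (add_le_add ((Finset.card_union_le _ _).trans
    (add_le_add ((Finset.card_union_le _ _).trans (add_le_add Finset.card_image_le
      Finset.card_image_le)) ?_)) ?_) <;>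
  split_ifs <;> simp [Finset.card_image_le.trans]

theorem card_swapNeighbors_add_LMP_add_RMP_lt {T : BTree} (hT : T ≠ nil) :
    T.swapNeighbors.card + T.LMP + T.RMP < 3 * T.size := by
  induction T with
  | nil => exact absurd rfl hT
  | node L R ihL ihR =>
    have h := card_swapNeighbors_node_le L R
    simp only [LMP, RMP, size]
    rcases eq_or_ne L nil with rfl | hL <;> rcases eq_or_ne R nil with rfl | hR
    · decide
    · have := ihR hR
      simp only [↓reduceIte, hR, swapNeighbors_nil, Finset.card_empty, LMP_nil, RMP_nil, size_nil]
        at h ⊢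
      omega
    · have := ihL hL
      simp only [↓reduceIte, hL, swapNeighbors_nil, Finset.card_empty, LMP_nil, RMP_nil, size_nil]
        at h ⊢
      omega
    · have := ihL hL
      have := ihR hR
      simp only [hL, hR, if_false] at h
      omega

theorem card_swapNeighbors_le (T : BTree) : T.swapNeighbors.card ≤ 3 * (T.size - 2) + 1 := by
  obtain _ | ⟨L, R⟩ := T
  · exact Nat.zero_le _
  have h := card_swapNeighbors_node_le L R
  simp only [size]
  rcases eq_or_ne L nil with rfl | hL <;> rcases eq_or_ne R nil with rfl | hR
  · decide
  · have := card_swapNeighbors_add_LMP_add_RMP_lt hR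
    have := LMP_pos hR
    have := RMP_pos hR
    simp only [↓reduceIte, hR, swapNeighbors_nil, Finset.card_empty, RMP_nil, size_nil] at h ⊢
    omega
  · have := card_swapNeighbors_add_LMP_add_RMP_lt hL
    have := LMP_pos hL
    have := RMP_pos hL
    simp only [↓reduceIte, hL, swapNeighbors_nil, Finset.card_empty, LMP_nil, size_nil] at h ⊢
    omega
  · have := card_swapNeighbors_add_LMP_add_RMP_lt hL
    have := card_swapNeighbors_add_LMP_add_RMP_lt hR
    have := LMP_pos hL
    have := RMP_pos hR
    simp only [hL, hR, if_false] at h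
    omega

/-- `k` is a 0-based in-order position. -/
def HasRightChildAt : BTree → ℕ → Prop
  | nil, _ => False
  | node L R, k => k < L.size ∧ L.HasRightChildAt k ∨ k = L.size ∧ R ≠ nil ∨
      L.size < k ∧ R.HasRightChildAt (k - L.size - 1)

variable {L R : BTree} {k : ℕ}

theorem hasRightChildAt_node_of_lt (hk : k < L.size) :
    (node L R).HasRightChildAt k ↔ L.HasRightChildAt k := by
  simp [HasRightChildAt, hk, hk.ne, hk.not_gt]

theorem hasRightChildAt_node_size : (node L R).HasRightChildAt L.size ↔ R ≠ nil := by
  simp [HasRightChildAt]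

theorem hasRightChildAt_node_of_gt (hk : L.size < k) :
    (node L R).HasRightChildAt k ↔ R.HasRightChildAt (k - L.size - 1) := by
  simp [HasRightChildAt, hk, hk.ne', hk.not_gt]

theorem not_hasRightChildAt_size_sub_one (T : BTree) : ¬ T.HasRightChildAt (T.size - 1) := by
  induction T with
  | nil => exact id
  | node L R _ ihR =>
    obtain rfl | hR := eq_or_ne R nil
    · simpa [size] using hasRightChildAt_node_size.not.2 (not_not.2 rfl)
    · have hRpos : 0 < R.size := by
        cases R
        · exact absurd rfl hR
        · exact Nat.succ_pos _
      rw [hasRightChildAt_node_of_gt (by simp [size]; omega)]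
      convert ihR using 2
      simp [size]

end BTree

theorem hasRightChildAt_ctreeL_iff {l : List ℤ} (hl : l.Nodup) {k : ℕ} (hk : k + 1 < l.length) :
    (ctreeL l).HasRightChildAt k ↔ l[k] < l[k + 1] := by
  induction l using cartesian_induction generalizing k with
  | nil => simp at hk
  | append_cons L v R hL hR ihL ihR =>
    rw [ctreeL_append_cons hL hR]
    rcases lt_trichotomy (k + 1) L.length with hkL | hkL | hkL
    · rw [hasRightChildAt_node_of_lt (by rw [size_ctreeL]; omega), ihL hl.of_append_left hkL,
        List.getElem_append_left hkL, List.getElem_append_left (by omega)]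
    · have hv : (L ++ v :: R)[k + 1] = v := by
        rw [List.getElem_append_right (by omega)]
        simp [← hkL]
      rw [hv, List.getElem_append_left (by omega),
        hasRightChildAt_node_of_lt (by rw [size_ctreeL]; omega)]
      refine iff_of_false (fun h => not_hasRightChildAt_size_sub_one (ctreeL L) ?_)
        (hL _ (List.getElem_mem _)).not_gt
      rwa [size_ctreeL, ← hkL, Nat.add_sub_cancel]
    obtain rfl | hkL := (Nat.lt_succ_iff.1 hkL).eq_or_lt
    · obtain ⟨w, R, rfl⟩ := List.exists_cons_of_ne_nil (l := R) (by rintro rfl; simp at hk)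
      have hv : (L ++ v :: w :: R)[L.length] = v := by simp
      have hw : (L ++ v :: w :: R)[L.length + 1] = w := by
        rw [List.getElem_append_right (by omega)]
        simp
      have hroot := hasRightChildAt_node_size (L := ctreeL L) (R := ctreeL (w :: R))
      rw [size_ctreeL] at hroot
      rw [hv, hw, hroot]
      exact iff_of_true (by simp [ctreeL_eq_nil_iff])
        (by simpa using lt_of_nodup_append_cons hl hR w (by simp))
    · obtain ⟨j, rfl⟩ := Nat.exists_eq_add_of_lt hkL
      have hj : j + 1 < R.length := by simp at hk; omega
      rw [hasRightChildAt_node_of_gt (by rw [size_ctreeL]; omega),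
        List.getElem_append_right (by omega), List.getElem_append_right (by omega)]
      simp only [size_ctreeL, show L.length + j + 1 - L.length = j + 1 by omega,
        show L.length + j + 1 + 1 - L.length = j + 1 + 1 by omega, List.getElem_cons_succ,
        Nat.add_sub_cancel]
      exact ihR (List.nodup_cons.1 hl.of_append_right).2 hj

section seqList

variable {x : ℕ → ℤ} {a b : ℕ}

@[simp]
theorem length_seqList : (seqList x a b).length = b + 1 - a := by
  simp [seqList]

@[simp]
theorem getElem_seqList {k : ℕ} (hk : k < (seqList x a b).length) :
    (seqList x a b)[k] = x (a + k) := by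
  simp [seqList]

theorem seqList_eq_cons (hab : a ≤ b) : seqList x a b = x a :: seqList x (a + 1) b := by
  rw [seqList, show b + 1 - a = b + 1 - (a + 1) + 1 by omega, List.range_succ_eq_map]
  simp [seqList, Function.comp_def, Nat.add_assoc, Nat.add_comm 1]

theorem seqList_congr {y : ℕ → ℤ} (h : ∀ j, a ≤ j → j ≤ b → x j = y j) :
    seqList x a b = seqList y a b :=
  List.map_congr_left fun k hk => h _ (by omega) (by simp at hk; omega)

theorem seqList_nodup_iff : (seqList x a b).Nodup ↔ Set.InjOn x (Set.Icc a b) := by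
  rw [seqList, List.nodup_map_iff_inj_on List.nodup_range]
  simp only [List.mem_range]
  constructor
  · rintro h p ⟨hap, hpb⟩ q ⟨haq, hqb⟩ hpq
    have := h (p - a) (by omega) (q - a) (by omega) (by rwa [Nat.add_sub_cancel' hap,
      Nat.add_sub_cancel' haq])
    omega
  · intro h k hk k' hk' hkk'
    have := h (Set.mem_Icc.2 ⟨Nat.le_add_right a k, by omega⟩)
      (Set.mem_Icc.2 ⟨Nat.le_add_right a k', by omega⟩) hkk'
    omega

theorem seqList_swapAt {i : ℕ} (hai : a ≤ i) (hib : i + 1 ≤ b) :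
    seqList (swapAt x i) a b = (seqList x a b).swapAdj (i - a) := by
  induction h : i - a generalizing a with
  | zero =>
    obtain rfl : i = a := by omega
    rw [seqList_eq_cons (x := swapAt x i) (a := i) (by omega),
      seqList_eq_cons (x := swapAt x i) (a := i + 1) hib,
      seqList_eq_cons (x := x) (a := i) (by omega), seqList_eq_cons (x := x) (a := i + 1) hib,
      List.swapAdj_cons_cons_zero,
      seqList_congr (x := swapAt x i) (y := x) (a := i + 1 + 1) (b := b)
        fun j hj _ => by simp [swapAt, show j ≠ i by omega, show j ≠ i + 1 by omega]]
    simp [swapAt]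
  | succ d ih =>
    rw [seqList_eq_cons (x := swapAt x i) (by omega), seqList_eq_cons (x := x) (by omega),
      List.swapAdj_cons_succ, ih (by omega) (by omega)]
    simp [swapAt, show a ≠ i by omega, show a ≠ i + 1 by omega]

end seqList

theorem swapAt_injOn {x : ℕ → ℤ} {a b i : ℕ} (hx : Set.InjOn x (Set.Icc a b)) (hai : a ≤ i)
    (hib : i + 1 ≤ b) : Set.InjOn (swapAt x i) (Set.Icc a b) := by
  rw [← seqList_nodup_iff, seqList_swapAt hai hib]
  exact (List.swapAdj_perm _ _).nodup_iff.2 (seqList_nodup_iff.2 hx)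

theorem ctreeOf_swapAt_mem_swapNeighbors {m i : ℕ} {x : ℕ → ℤ} (hx : Set.InjOn x (Set.Icc 1 m))
    (hi : 1 ≤ i) (him : i + 1 ≤ m) : ctreeOf m (swapAt x i) ∈ (ctreeOf m x).swapNeighbors := by
  rw [ctreeOf, ctreeOf, seqList_swapAt hi him]
  exact ctreeL_swapAdj_mem_swapNeighbors (seqList_nodup_iff.2 hx) (by simp; omega)

theorem ng_subset_swapNeighbors (m : ℕ) (T : BTree) : ng m T ⊆ T.swapNeighbors := by
  rintro S ⟨_, ⟨i, rfl⟩, hi, him, x, hx, rfl, rfl⟩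
  exact ctreeOf_swapAt_mem_swapNeighbors hx hi him

theorem lt_succ_iff_of_ctreeOf_eq {m k : ℕ} {x y : ℕ → ℤ} (hx : Set.InjOn x (Set.Icc 1 m))
    (hy : Set.InjOn y (Set.Icc 1 m)) (hxy : ctreeOf m x = ctreeOf m y) (hk : 1 ≤ k)
    (hkm : k + 1 ≤ m) : x k < x (k + 1) ↔ y k < y (k + 1) := by
  have key : ∀ z : ℕ → ℤ, Set.InjOn z (Set.Icc 1 m) →
      ((ctreeOf m z).HasRightChildAt (k - 1) ↔ z k < z (k + 1)) := fun z hz => by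
    rw [ctreeOf, hasRightChildAt_ctreeL_iff (seqList_nodup_iff.2 hz) (by simp; omega)]
    simp [show 1 + (k - 1) = k by omega, show 1 + (k - 1 + 1) = k + 1 by omega]
  rw [← key x hx, ← key y hy, hxy]

theorem ctreeOf_swapAt_ne {m i j : ℕ} {x : ℕ → ℤ} (hx : Set.InjOn x (Set.Icc 1 m)) (hi : 1 ≤ i)
    (hij : i < j) (hjm : j + 1 ≤ m) : ctreeOf m (swapAt x i) ≠ ctreeOf m (swapAt x j) := by
  intro h
  have asc k := lt_succ_iff_of_ctreeOf_eq (k := k) (swapAt_injOn hx hi (by omega))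
    (swapAt_injOn hx (by omega) hjm) h
  have hne : ∀ p q, 1 ≤ p → p ≤ m → 1 ≤ q → q ≤ m → p ≠ q → x p ≠ x q :=
    fun p q hp hpm hq hqm hpq hxpq => hpq (hx ⟨hp, hpm⟩ ⟨hq, hqm⟩ hxpq)
  have h₁ := asc i hi (by omega)
  obtain rfl | hj := eq_or_ne j (i + 1)
  · have h₂ := asc (i + 1) (by omega) hjm
    have := hne i (i + 1 + 1) hi (by omega) (by omega) hjm (by omega)
    simp only [swapAt, ↓reduceIte, Nat.add_eq_left, one_ne_zero, Nat.left_eq_add,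
      show i ≠ i + 1 + 1 by omega] at h₁ h₂
    omega
  · have := hne i (i + 1) hi (by omega) (by omega) (by omega) (by omega)
    simp only [swapAt, ↓reduceIte, Nat.add_eq_left, one_ne_zero, Nat.add_right_cancel_iff,
      show i ≠ j by omega, show i + 1 ≠ j by omega] at h₁
    omega

theorem ctreeOf_swapAt_injOn {m : ℕ} {x : ℕ → ℤ} (hx : Set.InjOn x (Set.Icc 1 m)) :
    Set.InjOn (fun i => ctreeOf m (swapAt x i)) (Set.Icc 1 (m - 1)) := by
  rintro i ⟨hi, him⟩ j ⟨hj, hjm⟩ hij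
  by_contra hne
  rcases Nat.lt_or_gt_of_ne hne with h | h
  · exact ctreeOf_swapAt_ne hx hi h (by omega) hij
  · exact ctreeOf_swapAt_ne hx hj h (by omega) hij.symm

namespace BTree

/-- Labelling the nodes in preorder from `b` on makes every node smaller than its descendants. -/
def preorderSeq : BTree → ℤ → List ℤ
  | nil, _ => []
  | node L R, b => L.preorderSeq (b + 1) ++ b :: R.preorderSeq (b + 1 + L.size)

theorem mem_preorderSeq {T : BTree} {b w : ℤ} (hw : w ∈ T.preorderSeq b) :
    b ≤ w ∧ w < b + T.size := by
  induction T generalizing b with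
  | nil => simp [preorderSeq] at hw
  | node L R ihL ihR =>
    simp only [preorderSeq, List.mem_append, List.mem_cons] at hw
    simp only [size, Nat.cast_add, Nat.cast_one]
    rcases hw with hw | rfl | hw
    · have := ihL hw
      omega
    · omega
    · have := ihR hw
      omega

theorem nodup_preorderSeq (T : BTree) (b : ℤ) : (T.preorderSeq b).Nodup := by
  induction T generalizing b with
  | nil => exact List.nodup_nil
  | node L R ihL ihR =>
    rw [preorderSeq, List.nodup_append, List.nodup_cons]
    refine ⟨ihL _, ⟨fun h => ?_, ihR _⟩, fun w hw w' hw' => ?_⟩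
    · have := mem_preorderSeq h
      omega
    · have := mem_preorderSeq hw
      rcases List.mem_cons.1 hw' with rfl | hw'
      · omega
      · have := mem_preorderSeq hw'
        omega

theorem ctreeL_preorderSeq (T : BTree) (b : ℤ) : ctreeL (T.preorderSeq b) = T := by
  induction T generalizing b with
  | nil => rfl
  | node L R ihL ihR =>
    rw [preorderSeq, ctreeL_append_cons (fun w hw => ?_) (fun w hw => ?_), ihL, ihR]
    · have := mem_preorderSeq hw
      omega
    · have := mem_preorderSeq hw
      omega

end BTree

theorem seqList_getD (l : List ℤ) : seqList (fun n => l.getD (n - 1) 0) 1 l.length = l := by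
  refine List.ext_getElem (by simp) fun k _ hk => ?_
  simp [hk]

theorem exists_injOn_ctreeOf_eq (T : BTree) :
    ∃ x : ℕ → ℤ, Set.InjOn x (Set.Icc 1 T.size) ∧ ctreeOf T.size x = T := by
  set l := T.preorderSeq 0
  have hl : seqList (fun n => l.getD (n - 1) 0) 1 T.size = l := by
    rw [← ctreeL_preorderSeq T 0, size_ctreeL]
    exact seqList_getD l
  refine ⟨fun n => l.getD (n - 1) 0, ?_, ?_⟩
  · rw [← seqList_nodup_iff, hl]
    exact nodup_preorderSeq T 0
  · rw [ctreeOf, hl, ctreeL_preorderSeq]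

theorem stmt10_general (m : ℕ) (T : BTree) (hT : T.size = m) :
    m - 1 ≤ (ng m T).ncard ∧ (ng m T).ncard ≤ 3 * (m - 2) + 1 := by
  have hfin : (ng m T).Finite := T.swapNeighbors.finite_toSet.subset (ng_subset_swapNeighbors m T)
  obtain ⟨x, hx, hxT⟩ := exists_injOn_ctreeOf_eq T
  rw [hT] at hx hxT
  constructor
  · calc m - 1 = (Set.Icc 1 (m - 1)).ncard := by simp
      _ ≤ (ng m T).ncard := by
        refine Set.ncard_le_ncard_of_injOn (fun i => ctreeOf m (swapAt x i)) ?_ ?_ hfin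
        · rintro i ⟨hi, him⟩
          exact Set.mem_iUnion.2 ⟨i, hi, by omega, x, hx, hxT, rfl⟩
        · exact ctreeOf_swapAt_injOn hx
  · calc (ng m T).ncard ≤ T.swapNeighbors.card := by
          simpa using Set.ncard_le_ncard (ng_subset_swapNeighbors m T)
      _ ≤ 3 * (m - 2) + 1 := hT ▸ T.card_swapNeighbors_le

theorem stmt10 (m : ℕ) (hm : 2 ≤ m) (T : BTree) (hT : T.size = m) :
    m - 1 ≤ (ng m T).ncard ∧ (ng m T).ncard ≤ 3 * (m - 2) + 1 :=
  stmt10_general m T hT
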